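/- arXiv:1801.08323 — 3 statements merged into one kernel-verified Lean document; each statement's English description precedes it below -/
import Mathlib

section
/- For every positive integer B and every integer w with |w| ≤ B, there exists a vector x ∈ {−1,0,1}^{p_B} such that ∑_{j=1}^{p_B} B_j · x_j = w and every nonzero coordinate x_j equals the sign of w (i.e., all x_j ∈ {0, sign(w)}). -/
/-- `pB B = ⌊log₂ B⌋ + 1`. -/
def pB (B : ℕ) : ℕ := Nat.log 2 B + 1

/-- `Bseq B j = ⌊(B + 2^{j-1}) / 2^j⌋`. -/
def Bseq (B j : ℕ) : ℕ := (B + 2 ^ (j - 1)) / 2 ^ j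

lemma pB_div (B : ℕ) (h2 : 2 ≤ B) : pB B = pB (B / 2) + 1 := by
  have h := Nat.log_div_base B 2
  have hpos : 0 < Nat.log 2 B := Nat.log_pos (by norm_num) h2
  simp [pB]
  omega

lemma Bseq_div (B j : ℕ) (hj : 1 ≤ j) : Bseq B (j + 1) = Bseq (B / 2) j := by
  obtain ⟨k, rfl⟩ := Nat.exists_eq_add_of_le hj
  show (B + 2 ^ (1 + k + 1 - 1)) / 2 ^ (1 + k + 1) = (B / 2 + 2 ^ (1 + k - 1)) / 2 ^ (1 + k)
  have e1 : 1 + k + 1 - 1 = k + 1 := by omega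
  have e2 : 1 + k - 1 = k := by omega
  rw [e1, e2, show (2 : ℕ) ^ (1 + k + 1) = 2 * 2 ^ (1 + k) from by ring,
    ← Nat.div_div_eq_div_mul]
  congr 1
  rw [show (2 : ℕ) ^ (k + 1) = 2 ^ k * 2 from by ring,
    Nat.add_mul_div_right B (2 ^ k) (by norm_num)]

lemma key : ∀ B : ℕ, 0 < B → ∀ n : ℕ, n ≤ B →
    ∃ S : Finset ℕ, S ⊆ Finset.Icc 1 (pB B) ∧ ∑ j ∈ S, Bseq B j = n := by
  intro B
  induction B using Nat.strong_induction_on with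
  | _ B ih =>
    intro hB n hn
    rcases Nat.lt_or_ge B 2 with h2 | h2
    · interval_cases B
      interval_cases n
      · exact ⟨∅, by simp⟩
      · exact ⟨{1}, by simp [pB, Bseq]⟩
    · have hB' : 0 < B / 2 := Nat.div_pos h2 (by norm_num)
      have hlt : B / 2 < B := Nat.div_lt_self hB (by norm_num)
      have hp := pB_div B h2
      have himg : ∀ (S : Finset ℕ), S ⊆ Finset.Icc 1 (pB (B / 2)) →
          (S.image (· + 1) ⊆ Finset.Icc 1 (pB B)) ∧
          ∑ j ∈ S.image (· + 1), Bseq B j = ∑ j ∈ S, Bseq (B / 2) j := by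
        intro S hS
        constructor
        · intro j hj
          simp only [Finset.mem_image] at hj
          obtain ⟨k, hk, rfl⟩ := hj
          have := hS hk
          simp only [Finset.mem_Icc] at this ⊢
          omega
        · rw [Finset.sum_image (by intro a _ b _ h; simp only at h; omega)]
          refine Finset.sum_congr rfl ?_
          intro j hj
          have := hS hj
          simp only [Finset.mem_Icc] at this
          exact Bseq_div B j this.1
      by_cases hle : n ≤ B / 2
      · obtain ⟨S, hS, hsum⟩ := ih (B / 2) hlt hB' n hle
        obtain ⟨h1, h2s⟩ := himg S hS
        exact ⟨S.image (· + 1), h1, by rw [h2s, hsum]⟩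
      · have hB1 : Bseq B 1 = (B + 1) / 2 := by simp [Bseq]
        have hle1 : Bseq B 1 ≤ n := by rw [hB1]; omega
        have hle2 : n - Bseq B 1 ≤ B / 2 := by rw [hB1]; omega
        obtain ⟨S, hS, hsum⟩ := ih (B / 2) hlt hB' (n - Bseq B 1) hle2
        obtain ⟨h1, h2s⟩ := himg S hS
        have hnot : 1 ∉ S.image (· + 1) := by
          simp only [Finset.mem_image]
          rintro ⟨k, hk, hk1⟩
          have := hS hk
          simp only [Finset.mem_Icc] at this
          omega
        refine ⟨insert 1 (S.image (· + 1)), ?_, ?_⟩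
        · intro j hj
          rcases Finset.mem_insert.mp hj with rfl | hj
          · simp [pB]
          · exact h1 hj
        · rw [Finset.sum_insert hnot, h2s, hsum]
          omega

theorem stmt2 (B : ℕ) (hB : 0 < B) (w : ℤ) (hw : |w| ≤ (B : ℤ)) :
    ∃ x : ℕ → ℤ, (∀ j ∈ Finset.Icc 1 (pB B), x j = 0 ∨ x j = Int.sign w) ∧
      ∑ j ∈ Finset.Icc 1 (pB B), (Bseq B j : ℤ) * x j = w := by
  have hn : w.natAbs ≤ B := by
    have := Int.abs_eq_natAbs w
    omega
  obtain ⟨S, hS, hsum⟩ := key B hB w.natAbs hn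
  refine ⟨fun j => if j ∈ S then Int.sign w else 0, ?_, ?_⟩
  · intro j _
    by_cases h : j ∈ S <;> simp [h]
  · have h1 : ∑ j ∈ Finset.Icc 1 (pB B), (Bseq B j : ℤ) * (if j ∈ S then Int.sign w else 0)
        = ∑ j ∈ S, (Bseq B j : ℤ) * (if j ∈ S then Int.sign w else 0) :=
      (Finset.sum_subset hS fun x _ hx => by simp [hx]).symm
    rw [h1, Finset.sum_congr rfl (fun j hj => by simp [hj] : ∀ j ∈ S,
      (Bseq B j : ℤ) * (if j ∈ S then Int.sign w else 0) = (Bseq B j : ℤ) * Int.sign w)]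
    rw [← Finset.sum_mul]
    rw [show (∑ j ∈ S, (Bseq B j : ℤ)) = (w.natAbs : ℤ) from by exact_mod_cast hsum]
    rw [mul_comm, Int.sign_mul_natAbs]
end

section
/- Let m, B be positive integers. For every vector w ∈ ℤ^m with ‖w‖_∞ ≤ B, there exists a vector ŵ ∈ B_{3mp_B} such that Ĥ_{m,B} · ŵ = w. -/
lemma Bseq_succ (B j : ℕ) : Bseq (B / 2) (j + 1) = Bseq B (j + 2) := by
  have h1 : (2:ℕ) ^ (j+2) = 2 * 2 ^ (j+1) := by rw [pow_succ, pow_succ]; ring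
  have h2 : (2:ℕ) ^ (j+1) = 2 ^ j * 2 := pow_succ 2 j
  calc Bseq (B/2) (j+1) = (B/2 + 2^j) / 2^(j+1) := by simp [Bseq]
  _ = (B + 2^j * 2) / 2 / 2^(j+1) := by
      rw [Nat.add_mul_div_right _ _ (by norm_num : (0:ℕ) < 2)]
  _ = (B + 2^(j+1)) / (2 * 2^(j+1)) := by rw [Nat.div_div_eq_div_mul, ← h2]
  _ = Bseq B (j+2) := by simp [Bseq, h1]

lemma pB_half (B : ℕ) (hB : 2 ≤ B) : pB B = pB (B / 2) + 1 := by
  simp only [pB]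
  have := Nat.log_div_base B 2
  have h1 : 0 < Nat.log 2 B := Nat.log_pos (by norm_num) hB
  simp only [Nat.log_div_base] at *
  omega

lemma digits_exist (B : ℕ) (x : ℤ) (h : |x| ≤ B) :
    ∃ ε : ℕ → ℤ, (∀ j, ε j = -1 ∨ ε j = 0 ∨ ε j = 1) ∧
      x = ∑ j ∈ Finset.range (pB B), ε j * Bseq B (j + 1) := by
  induction B using Nat.strong_induction_on generalizing x with
  | _ B ih =>
  rw [abs_le] at h
  by_cases hB2 : B ≤ 1
  · have hBz : (B:ℤ) ≤ 1 := by exact_mod_cast Nat.cast_le.mpr hB2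
    refine ⟨fun _ => x, fun j => by show x = -1 ∨ x = 0 ∨ x = 1; omega, ?_⟩
    have hp : pB B = 1 := by
      simp [pB, Nat.log_eq_zero_iff]; omega
    have hb : (Bseq B 1 : ℤ) = B := by
      interval_cases B <;> simp [Bseq]
    rw [hp, Finset.sum_range_one, hb]
    have hx : x = 0 ∨ (B:ℤ) = 1 := by omega
    rcases hx with h0 | h1
    · simp [h0]
    · simp [h1]
  · push_neg at hB2
    set B' := B / 2 with hB'
    have hlt : B' < B := by omega
    have hB1 : Bseq B 1 = B - B' := by simp only [Bseq, pow_one, pow_zero]; omega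
    have hdm : B ≤ 2 * B' + 1 ∧ 2 * B' ≤ B := by omega
    have hcB : ((B - B' : ℕ) : ℤ) = (B:ℤ) - B' := by
      push_cast [Nat.cast_sub (by omega : B' ≤ B)]; ring
    have hz1 : (B:ℤ) ≤ 2 * (B':ℤ) + 1 := by exact_mod_cast Nat.cast_le.mpr hdm.1
    have hz2 : 2 * (B':ℤ) ≤ B := by exact_mod_cast Nat.cast_le.mpr hdm.2
    obtain ⟨e1, he1v, hx'⟩ :
        ∃ e1 : ℤ, (e1 = -1 ∨ e1 = 0 ∨ e1 = 1) ∧ |x - e1 * Bseq B 1| ≤ (B' : ℤ) := by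
      rw [hB1]
      by_cases hgt : (B':ℤ) < x
      · exact ⟨1, by tauto, by rw [abs_le, hcB]; constructor <;> omega⟩
      · by_cases hlt2 : x < -(B':ℤ)
        · exact ⟨-1, by tauto, by rw [abs_le, hcB]; constructor <;> omega⟩
        · exact ⟨0, by tauto, by rw [abs_le]; constructor <;> omega⟩
    obtain ⟨ε', hε'1, hε'2⟩ := ih B' hlt _ hx'
    refine ⟨fun j => if j = 0 then e1 else ε' (j - 1), fun j => ?_, ?_⟩
    · show (if j = 0 then e1 else ε' (j - 1)) = -1 ∨
        (if j = 0 then e1 else ε' (j - 1)) = 0 ∨ (if j = 0 then e1 else ε' (j - 1)) = 1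
      split
      · exact he1v
      · exact hε'1 _
    · rw [pB_half B hB2, Finset.sum_range_succ']
      simp only [Nat.succ_ne_zero, if_false, if_true, Nat.add_sub_cancel, if_neg (Nat.succ_ne_zero _), if_pos rfl]
      have hre : ∑ j ∈ Finset.range (pB B'), ε' j * (Bseq B (j + 1 + 1) : ℤ)
          = ∑ j ∈ Finset.range (pB B'), ε' j * (Bseq B' (j + 1) : ℤ) :=
        Finset.sum_congr rfl (fun j _ => by rw [show j+1+1 = j+2 from rfl, Bseq_succ])
      rw [hre, ← hε'2]
      ring

lemma card_filter_fin (N : ℕ) (P : ℕ → Prop) [DecidablePred P] :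
    (Finset.univ.filter (fun i : Fin N => P i.val)).card
      = ((Finset.range N).filter P).card := by
  apply Finset.card_bij (fun (i : Fin N) _ => i.val)
  · intro i hi
    simp only [Finset.mem_filter, Finset.mem_range, Finset.mem_univ, true_and] at hi ⊢
    exact ⟨i.2, hi⟩
  · intro x _ y _ h; exact Fin.val_injective h
  · intro c hc
    simp only [Finset.mem_filter, Finset.mem_range, Finset.mem_univ, true_and] at hc ⊢
    exact ⟨⟨c, hc.1⟩, hc.2, rfl⟩

/-- `isB3 k v` says that `v ∈ {-1,0,1}^{3k}` has exactly `k` coordinates equal to `-1`,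
exactly `k` equal to `0`, and exactly `k` equal to `1`. -/
def isB3 (k : ℕ) (v : Fin (3 * k) → ℤ) : Prop :=
  (∀ i, v i = -1 ∨ v i = 0 ∨ v i = 1) ∧
  (Finset.univ.filter (fun i => v i = -1)).card = k ∧
  (Finset.univ.filter (fun i => v i = 0)).card = k ∧
  (Finset.univ.filter (fun i => v i = 1)).card = k

/-- The matrix `Ĥ_{m,B} = [H_{m,B} | 0] ∈ ℤ^{m × 3m·p_B}`, where `H_{m,B}` is block-diagonal
with row blocks `(B_1, …, B_{p_B})`. -/
def Hhat (m B : ℕ) : Matrix (Fin m) (Fin (3 * (m * pB B))) ℤ :=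
  fun i c => if (c : ℕ) / pB B = (i : ℕ) then (Bseq B ((c : ℕ) % pB B + 1) : ℤ) else 0

theorem stmt3 (m B : ℕ) (hm : 0 < m) (hB : 0 < B) (w : Fin m → ℤ)
    (hw : ∀ i, |w i| ≤ (B : ℤ)) :
    ∃ whato : Fin (3 * (m * pB B)) → ℤ, isB3 (m * pB B) whato ∧ (Hhat m B).mulVec whato = w := by
  classical
  set p := pB B with hp
  have hppos : 0 < p := Nat.succ_pos _
  set k := m * p with hk
  have hkpos : 0 < k := Nat.mul_pos hm hppos
  choose ε hε1 hε2 using fun i : Fin m => digits_exist B (w i) (hw i)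
  set ε' : ℕ → ℕ → ℤ := fun i j => if h : i < m then ε ⟨i, h⟩ j else 0 with hε'
  set G : ℕ → ℤ := fun c => ε' (c / p) (c % p) with hG
  have hGval : ∀ c, G c = -1 ∨ G c = 0 ∨ G c = 1 := by
    intro c
    have hGc : G c = if h : c / p < m then ε ⟨c / p, h⟩ (c % p) else 0 := rfl
    rw [hGc]
    split
    · exact hε1 _ _
    · tauto
  set a := ((Finset.range k).filter (fun c => G c = -1)).card with ha
  set b := ((Finset.range k).filter (fun c => G c = 0)).card with hb
  set c1 := ((Finset.range k).filter (fun c => G c = 1)).card with hc1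
  have habc : a + b + c1 = k := by
    have hunion : Finset.range k =
        ((Finset.range k).filter (fun c => G c = -1)) ∪
        (((Finset.range k).filter (fun c => G c = 0)) ∪
         ((Finset.range k).filter (fun c => G c = 1))) := by
      ext c
      simp only [Finset.mem_union, Finset.mem_filter]
      have := hGval c
      tauto
    have d23 : Disjoint ((Finset.range k).filter (fun c => G c = 0))
        ((Finset.range k).filter (fun c => G c = 1)) := by
      rw [Finset.disjoint_left]
      intro x hx hx'
      simp only [Finset.mem_filter] at hx hx'
      omega
    have d123 : Disjoint ((Finset.range k).filter (fun c => G c = -1))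
        (((Finset.range k).filter (fun c => G c = 0)) ∪
         ((Finset.range k).filter (fun c => G c = 1))) := by
      rw [Finset.disjoint_left]
      intro x hx hx'
      simp only [Finset.mem_filter, Finset.mem_union] at hx hx'
      omega
    have := congrArg Finset.card hunion
    rw [Finset.card_range, Finset.card_union_of_disjoint d123,
        Finset.card_union_of_disjoint d23] at this
    omega
  have hak : a ≤ k := by omega
  have hbk : a + b ≤ k := by omega
  set t1 := 2 * k - a with ht1
  set t2 := 3 * k - a - b with ht2
  have hkt1 : k ≤ t1 := by omega
  have ht1t2 : t1 ≤ t2 := by omega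
  have ht23 : t2 ≤ 3 * k := by omega
  set F : ℕ → ℤ := fun c => if c < k then G c
    else if c < t1 then -1 else if c < t2 then 0 else 1 with hF
  have hFval : ∀ c, F c = -1 ∨ F c = 0 ∨ F c = 1 := by
    intro c
    have hFc : F c = if c < k then G c else if c < t1 then -1 else if c < t2 then 0 else 1 := rfl
    rw [hFc]
    split_ifs
    · exact hGval c
    all_goals tauto
  -- count of each value over range (3*k)
  have hcount : ∀ z : ℤ, ((Finset.range (3 * k)).filter (fun c => F c = z)).card
      = ((Finset.range k).filter (fun c => G c = z)).card
        + ((Finset.Ico k t1).filter (fun c => F c = z)).card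
        + ((Finset.Ico t1 t2).filter (fun c => F c = z)).card
        + ((Finset.Ico t2 (3 * k)).filter (fun c => F c = z)).card := by
    intro z
    have hun : Finset.range (3 * k) =
        ((Finset.range k ∪ Finset.Ico k t1) ∪ Finset.Ico t1 t2) ∪ Finset.Ico t2 (3 * k) := by
      rw [Finset.range_eq_Ico, Finset.range_eq_Ico, Finset.Ico_union_Ico_eq_Ico (Nat.zero_le k) hkt1,
          Finset.Ico_union_Ico_eq_Ico (Nat.zero_le t1) ht1t2,
          Finset.Ico_union_Ico_eq_Ico (Nat.zero_le t2) ht23]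
    have hd : ∀ (s t : Finset ℕ), Disjoint s t →
        Disjoint (s.filter (fun c => F c = z)) (t.filter (fun c => F c = z)) := by
      intro s t hst
      exact Finset.disjoint_filter_filter hst
    have d1 : Disjoint (Finset.range k) (Finset.Ico k t1) := by
      rw [Finset.disjoint_left]; intro x hx hx'
      simp only [Finset.mem_range, Finset.mem_Ico] at hx hx'; omega
    have d2 : Disjoint (Finset.range k ∪ Finset.Ico k t1) (Finset.Ico t1 t2) := by
      rw [Finset.disjoint_left]; intro x hx hx'
      simp only [Finset.mem_range, Finset.mem_Ico, Finset.mem_union] at hx hx'; omega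
    have d3 : Disjoint ((Finset.range k ∪ Finset.Ico k t1) ∪ Finset.Ico t1 t2)
        (Finset.Ico t2 (3 * k)) := by
      rw [Finset.disjoint_left]; intro x hx hx'
      simp only [Finset.mem_range, Finset.mem_Ico, Finset.mem_union] at hx hx'; omega
    have hGF : ((Finset.range k).filter (fun c => F c = z))
        = ((Finset.range k).filter (fun c => G c = z)) := by
      apply Finset.filter_congr
      intro c hc
      simp only [Finset.mem_range] at hc
      show (if c < k then G c else _) = z ↔ _
      rw [if_pos hc]
    have e3 : Finset.filter (fun c => F c = z) (Finset.range k)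
        ∪ Finset.filter (fun c => F c = z) (Finset.Ico k t1)
        ∪ Finset.filter (fun c => F c = z) (Finset.Ico t1 t2)
        = Finset.filter (fun c => F c = z)
            (Finset.range k ∪ Finset.Ico k t1 ∪ Finset.Ico t1 t2) := by
      rw [Finset.filter_union, Finset.filter_union]
    have e2 : Finset.filter (fun c => F c = z) (Finset.range k)
        ∪ Finset.filter (fun c => F c = z) (Finset.Ico k t1)
        = Finset.filter (fun c => F c = z) (Finset.range k ∪ Finset.Ico k t1) := by
      rw [Finset.filter_union]
    rw [hun, Finset.filter_union, Finset.filter_union, Finset.filter_union,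
        Finset.card_union_of_disjoint (e3 ▸ Finset.disjoint_filter_filter d3),
        Finset.card_union_of_disjoint (e2 ▸ Finset.disjoint_filter_filter d2),
        Finset.card_union_of_disjoint (Finset.disjoint_filter_filter d1), hGF]
  have hIco_val : ∀ (l r : ℕ) (v z : ℤ), (∀ c, l ≤ c → c < r → F c = v) →
      ((Finset.Ico l r).filter (fun c => F c = z)).card = if v = z then r - l else 0 := by
    intro l r v z hv
    split
    · next hvz =>
      rw [Finset.filter_true_of_mem, Nat.card_Ico]
      intro c hc
      rw [Finset.mem_Ico] at hc
      rw [hv c hc.1 hc.2, hvz]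
    · next hvz =>
      rw [Finset.filter_false_of_mem, Finset.card_empty]
      intro c hc hcz
      rw [Finset.mem_Ico] at hc
      exact hvz ((hv c hc.1 hc.2).symm ▸ hcz ▸ rfl)
  have hFm1 : ∀ c, k ≤ c → c < t1 → F c = -1 := by
    intro c h1 h2
    show (if c < k then G c else if c < t1 then -1 else _) = -1
    rw [if_neg (by omega), if_pos h2]
  have hF0 : ∀ c, t1 ≤ c → c < t2 → F c = 0 := by
    intro c h1 h2
    show (if c < k then G c else if c < t1 then -1 else if c < t2 then 0 else 1) = 0
    rw [if_neg (by omega), if_neg (by omega), if_pos h2]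
  have hF1 : ∀ c, t2 ≤ c → c < 3 * k → F c = 1 := by
    intro c h1 _
    show (if c < k then G c else if c < t1 then -1 else if c < t2 then 0 else 1) = 1
    rw [if_neg (by omega), if_neg (by omega), if_neg (by omega)]
  have hcm1 : ((Finset.range (3 * k)).filter (fun c => F c = -1)).card = k := by
    rw [hcount, hIco_val k t1 (-1) (-1) hFm1, hIco_val t1 t2 0 (-1) hF0,
        hIco_val t2 (3 * k) 1 (-1) hF1]
    norm_num
    omega
  have hc0 : ((Finset.range (3 * k)).filter (fun c => F c = 0)).card = k := by
    rw [hcount, hIco_val k t1 (-1) 0 hFm1, hIco_val t1 t2 0 0 hF0,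
        hIco_val t2 (3 * k) 1 0 hF1]
    norm_num
    omega
  have hc1' : ((Finset.range (3 * k)).filter (fun c => F c = 1)).card = k := by
    rw [hcount, hIco_val k t1 (-1) 1 hFm1, hIco_val t1 t2 0 1 hF0,
        hIco_val t2 (3 * k) 1 1 hF1]
    norm_num
    omega
  refine ⟨fun c => F c.val, ⟨fun i => hFval i.val, ?_, ?_, ?_⟩, ?_⟩
  · rw [card_filter_fin (3 * (m * pB B)) (fun c => F c = -1)]; exact hcm1
  · rw [card_filter_fin (3 * (m * pB B)) (fun c => F c = 0)]; exact hc0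
  · rw [card_filter_fin (3 * (m * pB B)) (fun c => F c = 1)]; exact hc1'
  · funext i
    show ∑ c : Fin (3 * (m * pB B)), Hhat m B i c * F c.val = w i
    have hstep : ∀ c : Fin (3 * (m * pB B)),
        Hhat m B i c * F c.val
          = if (c : ℕ) / p = (i : ℕ) then (Bseq B ((c : ℕ) % p + 1) : ℤ) * F c.val else 0 := by
      intro c
      show (if (c : ℕ) / p = (i : ℕ) then ((Bseq B ((c : ℕ) % p + 1)) : ℤ) else 0) * F c.val = _
      split <;> simp
    rw [Finset.sum_congr rfl (fun c _ => hstep c), ← Finset.sum_filter, hε2 i]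
    have hjlt : ∀ j : ℕ, j ∈ Finset.range (pB B) → (i : ℕ) * p + j < 3 * (m * pB B) := by
      intro j hj
      rw [Finset.mem_range] at hj
      have hi : (i : ℕ) < m := i.2
      have : (i : ℕ) * p + j < ((i : ℕ) + 1) * p := by
        rw [add_mul, one_mul]
        omega
      have h2 : ((i : ℕ) + 1) * p ≤ m * p := Nat.mul_le_mul_right p (by omega)
      have h3 : m * p ≤ 3 * (m * p) := Nat.le_mul_of_pos_left _ (by norm_num)
      exact lt_of_lt_of_le this (le_trans h2 h3)
    refine Finset.sum_bij' (fun (c : Fin (3 * (m * pB B))) _ => (c : ℕ) % p)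
      (fun (j : ℕ) hj => (⟨(i : ℕ) * p + j, hjlt j hj⟩ : Fin (3 * (m * pB B))))
      ?_ ?_ ?_ ?_ ?_
    · intro c hc
      rw [Finset.mem_range]
      exact Nat.mod_lt _ hppos
    · intro j hj
      simp only [Finset.mem_filter, Finset.mem_univ, true_and]
      rw [Finset.mem_range] at hj
      show ((i : ℕ) * p + j) / p = (i : ℕ)
      rw [Nat.add_comm, Nat.add_mul_div_right _ _ hppos, Nat.div_eq_of_lt hj, Nat.zero_add]
    · intro c hc
      simp only [Finset.mem_filter, Finset.mem_univ, true_and] at hc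
      apply Fin.ext
      show (i : ℕ) * p + (c : ℕ) % p = (c : ℕ)
      rw [← hc]
      exact Nat.div_add_mod' _ _
    · intro j hj
      show ((i : ℕ) * p + j) % p = j
      rw [Finset.mem_range] at hj
      rw [Nat.add_comm, Nat.add_mul_mod_self_right, Nat.mod_eq_of_lt hj]
    · intro c hc
      simp only [Finset.mem_filter, Finset.mem_univ, true_and] at hc
      have hclt : (c : ℕ) < k := by
        have hdiv : (c : ℕ) / p < m := by rw [hc]; exact i.2
        exact (Nat.div_lt_iff_lt_mul hppos).mp hdiv
      have hFG : F (c : ℕ) = G (c : ℕ) := by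
        have : F (c : ℕ) = if (c : ℕ) < k then G (c : ℕ) else _ := rfl
        rw [this, if_pos hclt]
      have hGe : G (c : ℕ) = ε i ((c : ℕ) % p) := by
        have h1 : G (c : ℕ) = if h : (c : ℕ) / p < m then ε ⟨(c : ℕ) / p, h⟩ ((c : ℕ) % p) else 0 := rfl
        rw [h1, dif_pos (by rw [hc]; exact i.2)]
        congr 1
        apply Fin.ext
        show (c : ℕ) / p = (i : ℕ)
        exact hc
      rw [hFG, hGe]
      ring
end

section
/- Let T = 2^d with d ≥ 1 and let t, t' ∈ {0,…,T−1}. If for some j ∈ {1,…,d+1} the string sibling(j,t) ≠ ⊥ is a prefix of Bin(t'), then t' ≥ t. (In other words, no element of the node set Nodes_{(t→T−1)} is an ancestor of the leaf Bin(s) for any s < t.) -/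
/-- `bin d t` is the big-endian binary representation of `t` of length `d`:
its `j`-th entry (`1 ≤ j ≤ d`, i.e. index `j-1`) is the bit `t / 2^(d-j) % 2`. -/
def bin (d t : ℕ) : List Bool :=
  (List.range d).map (fun i => decide (t / 2 ^ (d - 1 - i) % 2 = 1))

/-- `sibling d j t` for `j ∈ {1,…,d+1}`: for `j ≤ d` it is
`(Bin(t)[1],…,Bin(t)[j-1],1)` when `Bin(t)[j] = 0` and `⊥` (`none`) when `Bin(t)[j] = 1`;
and `sibling d (d+1) t = Bin(t)`. -/
def sibling (d j t : ℕ) : Option (List Bool) :=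
  if j = d + 1 then some (bin d t)
  else if t / 2 ^ (d - j) % 2 = 0 then some ((bin d t).take (j - 1) ++ [true])
  else none

lemma bin_length (d t : ℕ) : (bin d t).length = d := by simp [bin]

lemma bin_getElem (d t i : ℕ) (h : i < (bin d t).length) :
    (bin d t)[i] = t.testBit (d - 1 - i) := by
  simp [bin, Nat.testBit_eq_decide_div_mod_eq] at h ⊢

lemma testBit_high {a d k : ℕ} (ha : a < 2 ^ d) (hk : d ≤ k) : a.testBit k = false := by
  apply Nat.testBit_lt_two_pow
  exact lt_of_lt_of_le ha (Nat.pow_le_pow_right (by norm_num) hk)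

/-- If some non-`⊥` node `sibling(j,t)` is a prefix of `Bin(t')`, then `t' ≥ t`;
i.e., no element of `Nodes_{(t→T-1)}` is an ancestor of the leaf `Bin(s)` for `s < t`. -/
theorem stmt12 (d t t' : ℕ) (hd : 1 ≤ d) (ht : t < 2 ^ d) (ht' : t' < 2 ^ d)
    (j : ℕ) (hj : j ∈ Finset.Icc 1 (d + 1)) (z : List Bool)
    (hz : sibling d j t = some z) (hpre : z <+: bin d t') :
    t ≤ t' := by
  simp only [Finset.mem_Icc] at hj
  obtain ⟨hj1, hj2⟩ := hj
  unfold sibling at hz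
  by_cases hcase : j = d + 1
  · -- z = bin d t, and z is a prefix of bin d t' with equal length, so t = t'
    rw [if_pos hcase] at hz
    have hzz : z = bin d t := (Option.some_inj.mp hz).symm
    have heq : bin d t = bin d t' := by
      rw [← hzz]
      exact List.IsPrefix.eq_of_length hpre (by rw [hzz, bin_length, bin_length])
    have : t = t' := by
      apply Nat.eq_of_testBit_eq
      intro k
      by_cases hk : k < d
      · have h1 : d - 1 - (d - 1 - k) = k := by omega
        have hi : d - 1 - k < (bin d t).length := by rw [bin_length]; omega
        have hi' : d - 1 - k < (bin d t').length := by rw [bin_length]; omega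
        have := bin_getElem d t (d - 1 - k) hi
        have h2 := bin_getElem d t' (d - 1 - k) hi'
        rw [h1] at this h2
        rw [← this, ← h2]
        congr 1
      · rw [testBit_high ht (by omega), testBit_high ht' (by omega)]
    omega
  · rw [if_neg hcase] at hz
    have hjd : j ≤ d := by omega
    by_cases hbit : t / 2 ^ (d - j) % 2 = 0
    · rw [if_pos hbit] at hz
      have hzz : z = (bin d t).take (j - 1) ++ [true] := (Option.some_inj.mp hz).symm
      subst hzz
      have hlen : ((bin d t).take (j - 1)).length = j - 1 := by
        rw [List.length_take, bin_length]; omega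
      -- the key bit: index j-1 of bin d t' is true
      apply le_of_lt
      apply Nat.lt_of_testBit (d - j)
      · rw [Nat.testBit_eq_decide_div_mod_eq, hbit]; simp
      · have hi' : j - 1 < (bin d t').length := by rw [bin_length]; omega
        have hidx : j - 1 < ((bin d t).take (j - 1) ++ [true]).length := by
          simp [hlen]
        have := hpre.getElem hidx
        rw [List.getElem_append_right (by omega)] at this
        simp only [hlen] at this
        have h2 := bin_getElem d t' (j - 1) hi'
        have h3 : d - 1 - (j - 1) = d - j := by omega
        rw [h3] at h2
        rw [← h2]
        rw [← this]
        simp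
      · intro k hk
        by_cases hkd : k < d
        · have hik : d - 1 - k < j - 1 := by omega
          have hi : d - 1 - k < (bin d t).length := by rw [bin_length]; omega
          have hi' : d - 1 - k < (bin d t').length := by rw [bin_length]; omega
          have hidx : d - 1 - k < ((bin d t).take (j - 1) ++ [true]).length := by
            simp [hlen]; omega
          have hpe := hpre.getElem hidx
          rw [List.getElem_append_left (by omega)] at hpe
          rw [List.getElem_take] at hpe
          have e1 := bin_getElem d t (d - 1 - k) hi
          have e2 := bin_getElem d t' (d - 1 - k) hi'
          have h1 : d - 1 - (d - 1 - k) = k := by omega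
          rw [h1] at e1 e2
          rw [← e1, ← e2]
          exact hpe
        · rw [testBit_high ht (by omega), testBit_high ht' (by omega)]
    · rw [if_neg hbit] at hz; exact absurd hz (by simp)
end
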